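/- Let G be a group and let a1, a2, a3, a4, b be elements of G such that a1, a2, a3, a4 pairwise commute. Set A13 = a1*a3, A24 = a2*a4, and phi~ = a1^{-2} * a2^{-2} * a3^{-2} * a4^{-2} * (A13 * b * A24 * b)^2. Then (A13 * A24) * phi~ * (A13 * A24)^{-1} = (A24^{-1} * b * A24) * b * (A13 * b * A13^{-1}) * (A13 * A24 * b * A24^{-1} * A13^{-1}). -/
import Mathlib

/-- The product of the inverse squares of four pairwise-commuting elements
equals the inverse of the square of `(a1*a3)*(a2*a4)`. -/
theorem key_inv_sq {G : Type*} [Group G] (a1 a2 a3 a4 : G)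
    (h12 : Commute a1 a2) (h13 : Commute a1 a3) (h14 : Commute a1 a4)
    (h23 : Commute a2 a3) (h24 : Commute a2 a4) (h34 : Commute a3 a4) :
    a1 ^ (-2 : ℤ) * a2 ^ (-2 : ℤ) * a3 ^ (-2 : ℤ) * a4 ^ (-2 : ℤ) =
      (((a1 * a3) * (a2 * a4)) ^ 2)⁻¹ := by
  have e : (a1*a3)*(a2*a4) = a1*(a2*(a3*a4)) := by
    rw [mul_assoc, ← mul_assoc a3, h23.symm.eq]; group
  rw [e, ((h12.mul_right (h13.mul_right h14)).mul_pow 2),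
      ((h23.mul_right h24).mul_pow 2), (h34.mul_pow 2)]
  simp only [mul_inv_rev, zpow_neg, zpow_ofNat]
  have c12 := ((h12.pow_pow 2 2).inv_inv)
  have c13 := ((h13.pow_pow 2 2).inv_inv)
  have c14 := ((h14.pow_pow 2 2).inv_inv)
  have c23 := ((h23.pow_pow 2 2).inv_inv)
  have c24 := ((h24.pow_pow 2 2).inv_inv)
  have c34 := ((h34.pow_pow 2 2).inv_inv)
  rw [((c14.mul_left c24).mul_left c34).eq]
  rw [(c13.mul_left c23).eq, c12.eq]
  group

/-- Algebraic content of the claim that Van Horn-Morris's monodromy `φ~₁`, after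
a global conjugation by `A13 * A24`, equals the product of four positive Dehn
twists `D(A24⁻¹(b)) D(b) D(A13(b)) D(A13 A24(b))`. Here `A13 = a1*a3`,
`A24 = a2*a4` and `φ~ = a1⁻² a2⁻² a3⁻² a4⁻² (A13 b A24 b)²`. -/
theorem stmt1 {G : Type*} [Group G] (a1 a2 a3 a4 b : G)
    (h12 : Commute a1 a2) (h13 : Commute a1 a3) (h14 : Commute a1 a4)
    (h23 : Commute a2 a3) (h24 : Commute a2 a4) (h34 : Commute a3 a4) :
    ((a1 * a3) * (a2 * a4)) *
        (a1 ^ (-2 : ℤ) * a2 ^ (-2 : ℤ) * a3 ^ (-2 : ℤ) * a4 ^ (-2 : ℤ) *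
          ((a1 * a3) * b * (a2 * a4) * b) ^ 2) *
        ((a1 * a3) * (a2 * a4))⁻¹ =
      ((a2 * a4)⁻¹ * b * (a2 * a4)) * b * ((a1 * a3) * b * (a1 * a3)⁻¹) *
        ((a1 * a3) * (a2 * a4) * b * (a2 * a4)⁻¹ * (a1 * a3)⁻¹) := by
  rw [key_inv_sq a1 a2 a3 a4 h12 h13 h14 h23 h24 h34, pow_two, pow_two]
  group
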